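/- arXiv:2403.06587 — 4 statements merged into one kernel-verified Lean document; each statement's English description precedes it below -/
import Mathlib

section
/- For a rooted ordered tree A with proximity matrix P, multiplicities ρ, a numbering n of the vertices by nonnegative integers, and valuations ν defined by ν = P⁻¹ n, the valuation of the root equals ν_r = Σ_{c ∈ A} ρ_c · n_c. -/
open Matrix Finset

/-- For a rooted ordered tree with proximity matrix `P`, multiplicities `ρ`
(ρ_root = 1, ρ_c = sum of multiplicities of parents), numbering `n` by
nonnegative integers and valuations `ν = P⁻¹ n`, the valuation of the root
equals `∑ c, ρ c * n c`. -/
theorem root_valuation_eq_sum_multiplicities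
    (N : ℕ) (r : Fin N) (parents : Fin N → Finset (Fin N))
    (hroot : parents r = ∅)
    (hparent : ∀ i j : Fin N, i ∈ parents j → i < j)
    (P : Matrix (Fin N) (Fin N) ℚ)
    (hP : ∀ i j, P i j = if i = j then 1 else if i ∈ parents j then -1 else 0)
    (ρ : Fin N → ℚ) (hρr : ρ r = 1)
    (hρ : ∀ c, c ≠ r → ρ c = ∑ c' ∈ parents c, ρ c')
    (n : Fin N → ℕ) (ν : Fin N → ℚ)
    (hν : ν = P⁻¹ *ᵥ (fun c => (n c : ℚ))) :
    ν r = ∑ c, ρ c * n c := by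
  -- P is upper triangular with 1's on the diagonal, hence det P = 1.
  have hdet : P.det = 1 := by
    rw [Matrix.det_of_upperTriangular]
    · simp [hP]
    · intro i j hij
      simp only [id] at hij
      rw [hP, if_neg (ne_of_gt hij),
        if_neg (fun hm => absurd (hparent i j hm) (lt_asymm hij))]
  have hinv : P * P⁻¹ = 1 := Matrix.mul_nonsing_inv P (by simp [hdet])
  -- ρ ᵥ* P is the indicator vector of r
  have hvm : ρ ᵥ* P = fun j => if j = r then 1 else 0 := by
    funext j
    have : (ρ ᵥ* P) j = ∑ i, ρ i * P i j := rfl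
    rw [this]
    have hsplit : ∀ i : Fin N, ρ i * P i j
        = (if i = j then ρ i else 0) + (if i ∈ parents j then -ρ i else 0) := by
      intro i
      rw [hP]
      by_cases h1 : i = j
      · subst h1
        have : i ∉ parents i := fun hm => absurd (hparent i i hm) (lt_irrefl i)
        simp [this]
      · by_cases h2 : i ∈ parents j <;> simp [h1, h2]
    rw [Finset.sum_congr rfl (fun i _ => hsplit i), Finset.sum_add_distrib]
    rw [Finset.sum_ite_eq' Finset.univ j ρ]
    have : (∑ i, if i ∈ parents j then -ρ i else 0) = ∑ i ∈ parents j, -ρ i := by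
      rw [Finset.sum_ite_mem]
      simp
    rw [this, Finset.sum_neg_distrib]
    by_cases hj : j = r
    · subst hj
      simp [hroot, hρr]
    · simp [hρ j hj, hj]
  calc ν r = (fun j => if j = r then (1:ℚ) else 0) ⬝ᵥ ν := by
        simp [dotProduct]
    _ = (ρ ᵥ* P) ⬝ᵥ ν := by rw [hvm]
    _ = ρ ⬝ᵥ (P *ᵥ ν) := (Matrix.dotProduct_mulVec _ _ _).symm
    _ = ρ ⬝ᵥ (fun c => (n c : ℚ)) := by
        rw [hν, Matrix.mulVec_mulVec, hinv, Matrix.one_mulVec]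
    _ = ∑ c, ρ c * n c := rfl
end

section
/- If the access tree from the root r to a vertex c' in a rooted ordered tree A satisfies ρ_{c'} = 1 (multiplicity one), then the access tree is a totally ordered linear chain of vertices, each of multiplicity 1, and its proximity matrix is the matrix with 1 on the diagonal, -1 on the superdiagonal, and 0 elsewhere. -/
open Matrix Finset

/-- If the access tree from the root `r` to a vertex `c'` satisfies `ρ_{c'} = 1`,
then it is a totally ordered linear chain of vertices of multiplicity 1, and its
proximity matrix has 1 on the diagonal, -1 on the superdiagonal, 0 elsewhere. -/
theorem access_tree_of_multiplicity_one_is_chain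
    (N : ℕ) (r c' : Fin N) (parents : Fin N → Finset (Fin N))
    (hroot : parents r = ∅)
    (hparent : ∀ i j : Fin N, i ∈ parents j → i < j)
    (hnonroot : ∀ j, j ≠ r → (parents j).Nonempty)
    (ρ : Fin N → ℚ) (hρr : ρ r = 1)
    (hρ : ∀ c, c ≠ r → ρ c = ∑ u ∈ parents c, ρ u)
    (P : Matrix (Fin N) (Fin N) ℚ)
    (hP : ∀ i j, P i j = if i = j then 1 else if i ∈ parents j then -1 else 0)
    (Anc : Finset (Fin N))
    (hAnc : ∀ u, u ∈ Anc ↔ Relation.ReflTransGen (fun a b => a ∈ parents b) u c')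
    (hmult : ρ c' = 1) :
    ∃ (k : ℕ) (e : Fin (k + 1) → Fin N), Function.Injective e ∧
      Finset.image e Finset.univ = Anc ∧ e 0 = r ∧ e (Fin.last k) = c' ∧
      (∀ i, ρ (e i) = 1) ∧
      (∀ i : Fin k, parents (e i.succ) = {e i.castSucc}) ∧
      (∀ i j : Fin (k + 1), P (e i) (e j) =
        if i = j then 1 else if (i : ℕ) + 1 = (j : ℕ) then -1 else 0) := by
  classical
  -- a parent-selection function
  have hex : ∀ c : Fin N, ∃ u : Fin N, (c = r ∧ u = c) ∨ (c ≠ r ∧ u ∈ parents c) := by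
    intro c
    by_cases h : c = r
    · exact ⟨c, Or.inl ⟨h, rfl⟩⟩
    · obtain ⟨u, hu⟩ := hnonroot c h
      exact ⟨u, Or.inr ⟨h, hu⟩⟩
  choose p hp using hex
  have hpr : p r = r := by
    rcases hp r with ⟨_, h⟩ | ⟨h, _⟩
    · exact h
    · exact absurd rfl h
  have hp_mem : ∀ c, c ≠ r → p c ∈ parents c := by
    intro c hc
    rcases hp c with ⟨h, _⟩ | ⟨_, h⟩
    · exact absurd h hc
    · exact h
  have hp_lt : ∀ c, c ≠ r → p c < c := fun c hc => hparent _ _ (hp_mem c hc)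
  -- everything has multiplicity at least 1
  have hge : ∀ n : ℕ, ∀ c : Fin N, (c : ℕ) < n → 1 ≤ ρ c := by
    intro n
    induction n with
    | zero => intro c hc; omega
    | succ n ih =>
      intro c hc
      by_cases hcr : c = r
      · rw [hcr, hρr]
      · rw [hρ c hcr]
        obtain ⟨u, hu⟩ := hnonroot c hcr
        have hterm : ∀ v ∈ parents c, (1 : ℚ) ≤ ρ v := by
          intro v hv
          have : (v : ℕ) < n := by
            have := hparent v c hv
            omega
          exact ih v this
        calc (1 : ℚ) ≤ ρ u := hterm u hu
          _ ≤ ∑ v ∈ parents c, ρ v :=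
            Finset.single_le_sum (fun v hv => le_trans zero_le_one (hterm v hv)) hu
  have hge' : ∀ c : Fin N, 1 ≤ ρ c := fun c => hge (c + 1) c (by omega)
  -- nodes of multiplicity 1 have a single parent of multiplicity 1
  have hB : ∀ c : Fin N, ρ c = 1 → c ≠ r → parents c = {p c} ∧ ρ (p c) = 1 := by
    intro c hc hcr
    have hsum : ∑ u ∈ parents c, ρ u = 1 := by rw [← hρ c hcr, hc]
    have hcard : (parents c).card = 1 := by
      have h1 : ((parents c).card : ℚ) ≤ 1 := by
        calc ((parents c).card : ℚ) = ∑ _u ∈ parents c, (1 : ℚ) := by simp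
          _ ≤ ∑ u ∈ parents c, ρ u := Finset.sum_le_sum (fun v _ => hge' v)
          _ = 1 := hsum
      have h2 : 1 ≤ (parents c).card := Finset.card_pos.mpr (hnonroot c hcr)
      have : (parents c).card ≤ 1 := by exact_mod_cast h1
      omega
    obtain ⟨u, hu⟩ := Finset.card_eq_one.mp hcard
    have hpc : p c = u := by
      have := hp_mem c hcr
      rw [hu, Finset.mem_singleton] at this
      exact this
    have hρu : ρ u = 1 := by
      rw [hu, Finset.sum_singleton] at hsum
      exact hsum
    exact ⟨by rw [hu, hpc], by rw [hpc]; exact hρu⟩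
  -- multiplicities along the iterated-parent chain
  have hρchain : ∀ j : ℕ, ρ (p^[j] c') = 1 := by
    intro j
    induction j with
    | zero => simpa using hmult
    | succ j ih =>
      rw [Function.iterate_succ_apply']
      by_cases h : p^[j] c' = r
      · rw [h, hpr, hρr]
      · exact (hB _ ih h).2
  -- the chain reaches the root
  have hreach : ∃ j : ℕ, p^[j] c' = r := by
    have key : ∀ j : ℕ, p^[j] c' = r ∨ ((p^[j] c' : ℕ) + j ≤ (c' : ℕ)) := by
      intro j
      induction j with
      | zero => right; simp
      | succ j ih =>
        rcases ih with h | h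
        · left; rw [Function.iterate_succ_apply', h, hpr]
        · by_cases hr : p^[j] c' = r
          · left; rw [Function.iterate_succ_apply', hr, hpr]
          · right
            have := hp_lt _ hr
            rw [Function.iterate_succ_apply']
            have hlt : (p (p^[j] c') : ℕ) < (p^[j] c' : ℕ) := this
            omega
    refine ⟨(c' : ℕ) + 1, ?_⟩
    rcases key ((c' : ℕ) + 1) with h | h
    · exact h
    · exfalso; omega
  set k := Nat.find hreach with hkdef
  have hk : p^[k] c' = r := Nat.find_spec hreach
  have hkmin : ∀ j, j < k → p^[j] c' ≠ r := fun j hj => Nat.find_min hreach hj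
  -- strict decrease along the chain
  have hdec : ∀ d a : ℕ, 0 < d → a + d ≤ k → p^[a + d] c' < p^[a] c' := by
    intro d
    induction d with
    | zero => intro a h; omega
    | succ d ih =>
      intro a hd hak
      have hne : p^[a + d] c' ≠ r := hkmin _ (by omega)
      have hstep : p^[a + d + 1] c' < p^[a + d] c' := by
        rw [Function.iterate_succ_apply']
        exact hp_lt _ hne
      rcases Nat.eq_zero_or_pos d with hd0 | hd0
      · subst hd0; simpa using hstep
      · calc p^[a + (d + 1)] c' = p^[a + d + 1] c' := by ring_nf
          _ < p^[a + d] c' := hstep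
          _ < p^[a] c' := ih a hd0 (by omega)
  -- the chain embedding
  refine ⟨k, fun i => p^[k - (i : ℕ)] c', ?_, ?_, ?_, ?_, ?_, ?_, ?_⟩
  · -- injective (in fact strictly monotone)
    have hmono : ∀ i j : Fin (k + 1), i < j → p^[k - (i : ℕ)] c' < p^[k - (j : ℕ)] c' := by
      intro i j hij
      have h1 : (i : ℕ) < j := hij
      have h2 : (j : ℕ) ≤ k := by omega
      have := hdec ((j : ℕ) - (i : ℕ)) (k - (j : ℕ)) (by omega) (by omega)
      have heq : k - (j : ℕ) + ((j : ℕ) - (i : ℕ)) = k - (i : ℕ) := by omega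
      rwa [heq] at this
    intro i j hij
    by_contra hne
    rcases lt_or_gt_of_ne hne with h | h
    · exact absurd hij (ne_of_gt (hmono i j h)).symm
    · exact absurd hij (ne_of_gt (hmono j i h))
  · -- image is the ancestor set
    ext u
    simp only [Finset.mem_image, Finset.mem_univ, true_and, hAnc]
    constructor
    · rintro ⟨i, rfl⟩
      -- every p^[j] c' is an ancestor
      have hAncIter : ∀ j : ℕ, j ≤ k →
          Relation.ReflTransGen (fun a b => a ∈ parents b) (p^[j] c') c' := by
        intro j
        induction j with
        | zero => intro _; exact Relation.ReflTransGen.refl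
        | succ j ih =>
          intro hj
          have hne : p^[j] c' ≠ r := hkmin j (by omega)
          have hmem : p^[j + 1] c' ∈ parents (p^[j] c') := by
            rw [Function.iterate_succ_apply']
            exact hp_mem _ hne
          exact Relation.ReflTransGen.head hmem (ih (by omega))
      exact hAncIter _ (by omega)
    · intro hu
      -- ancestors are exactly the chain
      have : ∃ j : ℕ, j ≤ k ∧ p^[j] c' = u := by
        induction hu using Relation.ReflTransGen.head_induction_on with
        | refl => exact ⟨0, by omega, rfl⟩
        | @head a v hac hrest ih =>
          obtain ⟨j, hj, hveq⟩ := ih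
          have hvr : v ≠ r := by
            intro hv
            rw [hv, hroot] at hac
            exact absurd hac (Finset.notMem_empty a)
          have hjk : j < k := by
            rcases Nat.lt_or_ge j k with h | h
            · exact h
            · exfalso
              have hjr : p^[j] c' = r := by
                have h2 : p^[j] c' = p^[j - k] (p^[k] c') := by
                  rw [← Function.iterate_add_apply]
                  congr 1; omega
                rw [h2, hk]
                have h3 : ∀ m : ℕ, p^[m] r = r := by
                  intro m
                  induction m with
                  | zero => rfl
                  | succ m ih => rw [Function.iterate_succ_apply', ih, hpr]
                exact h3 _
              rw [hveq] at hjr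
              exact hvr hjr
          have hρv : ρ v = 1 := by rw [← hveq]; exact hρchain j
          have hpar := (hB v hρv hvr).1
          rw [hpar, Finset.mem_singleton] at hac
          refine ⟨j + 1, by omega, ?_⟩
          rw [Function.iterate_succ_apply', hveq, ← hac]
      obtain ⟨j, hj, hju⟩ := this
      exact ⟨⟨k - j, by omega⟩, by simp only []; rw [show k - (k - j) = j by omega]; exact hju⟩
  · -- e 0 = r
    simpa using hk
  · -- e last = c'
    simp [Fin.last]
  · -- multiplicities
    intro i; exact hρchain _
  · -- parent structure
    intro i
    have hi : (i : ℕ) < k := i.isLt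
    have hne : p^[k - ((i : ℕ) + 1)] c' ≠ r := hkmin _ (by omega)
    have := (hB _ (hρchain _) hne).1
    simp only [Fin.coe_castSucc, Fin.val_succ]
    rw [this]
    have h1 : p (p^[k - ((i : ℕ) + 1)] c') = p^[k - ((i : ℕ) + 1) + 1] c' :=
      (Function.iterate_succ_apply' p _ c').symm
    rw [h1]
    congr 2
    omega
  · -- proximity matrix entries
    intro i j
    show P (p^[k - (i : ℕ)] c') (p^[k - (j : ℕ)] c') =
      if i = j then 1 else if (i : ℕ) + 1 = (j : ℕ) then -1 else 0
    rw [hP]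
    by_cases hij : i = j
    · subst hij
      simp
    · have hne : p^[k - (i : ℕ)] c' ≠ p^[k - (j : ℕ)] c' := by
        intro h
        apply hij
        by_contra hij'
        have hmono : ∀ a b : Fin (k + 1), a < b → p^[k - (a : ℕ)] c' < p^[k - (b : ℕ)] c' := by
          intro a b hab
          have h1 : (a : ℕ) < b := hab
          have h2 : (b : ℕ) ≤ k := by omega
          have := hdec ((b : ℕ) - (a : ℕ)) (k - (b : ℕ)) (by omega) (by omega)
          have heq : k - (b : ℕ) + ((b : ℕ) - (a : ℕ)) = k - (a : ℕ) := by omega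
          rwa [heq] at this
        rcases lt_or_gt_of_ne hij' with hlt | hlt
        · exact absurd h (ne_of_lt (hmono i j hlt))
        · exact absurd h.symm (ne_of_lt (hmono j i hlt))
      rw [if_neg hne, if_neg hij]
      by_cases hsucc : (i : ℕ) + 1 = (j : ℕ)
      · rw [if_pos hsucc]
        have hj1 : 1 ≤ (j : ℕ) := by omega
        have hjne : p^[k - (j : ℕ)] c' ≠ r := hkmin _ (by omega)
        have hpar := (hB _ (hρchain _) hjne).1
        rw [hpar]
        have h2 : p (p^[k - (j : ℕ)] c') = p^[k - (i : ℕ)] c' := by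
          rw [show p (p^[k - (j : ℕ)] c') = p^[k - (j : ℕ) + 1] c' from
            (Function.iterate_succ_apply' p _ c').symm]
          congr 1
          omega
        rw [if_pos (by rw [h2]; exact Finset.mem_singleton_self _)]
      · rw [if_neg hsucc]
        rcases Nat.eq_zero_or_pos (j : ℕ) with hj0 | hj0
        · have : p^[k - (j : ℕ)] c' = r := by rw [hj0]; simpa using hk
          rw [if_neg (by rw [this, hroot]; exact Finset.notMem_empty _)]
        · have hjne : p^[k - (j : ℕ)] c' ≠ r := hkmin _ (by omega)
          have hpar := (hB _ (hρchain _) hjne).1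
          rw [hpar]
          rw [if_neg]
          rw [Finset.mem_singleton]
          intro h
          -- p (p^[k-j] c') = p^[k-(j-1)] c'
          have hstep : p (p^[k - (j : ℕ)] c') = p^[k - ((j : ℕ) - 1)] c' := by
            rw [show p (p^[k - (j : ℕ)] c') = p^[k - (j : ℕ) + 1] c' from
              (Function.iterate_succ_apply' p _ c').symm]
            congr 1
            omega
          rw [hstep] at h
          -- so k - i and k - (j-1) give equal iterates; strict decrease forces equality
          have hmono : ∀ a b : ℕ, a < b → b ≤ k → p^[k - a] c' ≠ p^[k - b] c' ∧
              p^[k - b] c' ≠ p^[k - a] c' := by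
            intro a b hab hbk
            have := hdec (b - a) (k - b) (by omega) (by omega)
            have heq : k - b + (b - a) = k - a := by omega
            rw [heq] at this
            exact ⟨ne_of_lt this, ne_of_gt this⟩
          have hij2 : (i : ℕ) ≠ (j : ℕ) - 1 := by omega
          rcases Nat.lt_or_ge (i : ℕ) ((j : ℕ) - 1) with hlt | hge2
          · exact (hmono (i : ℕ) ((j : ℕ) - 1) hlt (by omega)).2 h.symm
          · have : (j : ℕ) - 1 < (i : ℕ) := by omega
            exact (hmono ((j : ℕ) - 1) (i : ℕ) this (by omega)).1 h.symm
end

section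
/- Let A be a rooted ordered tree, n a numbering, and Δ^n, Δ^{c·n} the Saito dicriticities for numberings n and c·n. Suppose s is a vertex with parents satisfying δ_s^n + δ_s^{c·n} = 1 and Δ_s^n + Δ_s^{c·n} = 1, where ν_s^{c·n} = ν_s^n + 1. Then the sum of square indices satisfies □_s^n + □_s^{c·n} = -1/2. -/
/-! Since `νcn - δcn = (νn - δn) + 2 δn`, both parity selectors are read at the same parity, so
they add up to a selector between `Δn + Δcn = 1` and `1/2 + 1/2 = 1`, i.e. to `1`; the halves
`δ / 2` contribute `1/2`. -/

/-- `pairSel a b k` equals `a` if `k` is even and `b` if `k` is odd. -/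
def pairSel (a b : ℚ) (k : ℤ) : ℚ := if Even k then a else b

theorem pairSel_add_two_mul (a b : ℚ) (k m : ℤ) : pairSel a b (k + 2 * m) = pairSel a b k := by
  simp only [pairSel, Int.even_add, even_two_mul, iff_true]

theorem pairSel_add_pairSel (a b a' b' : ℚ) (k : ℤ) :
    pairSel a b k + pairSel a' b' k = pairSel (a + a') (b + b') k := by
  unfold pairSel
  split_ifs <;> rfl

theorem pairSel_self (a : ℚ) (k : ℤ) : pairSel a a k = a :=
  ite_self a

theorem mixed_branch_square_index_sum_general
    (δn δcn Δn Δcn νn νcn : ℤ)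
    (hΔ : Δn + Δcn = 1)
    (hδ : δn + δcn = 1)
    (hν : νcn = νn + 1) :
    ((δn : ℚ) / 2 - pairSel (Δn : ℚ) (1/2) (νn - δn)) +
      ((δcn : ℚ) / 2 - pairSel (Δcn : ℚ) (1/2) (νcn - δcn)) = -(1/2) := by
  have hk : νcn - δcn = (νn - δn) + 2 * δn := by omega
  have hδq : (δn : ℚ) + δcn = 1 := by exact_mod_cast hδ
  have hΔq : (Δn : ℚ) + Δcn = 1 := by exact_mod_cast hΔ
  rw [hk, pairSel_add_two_mul]
  calc ((δn : ℚ) / 2 - pairSel (Δn : ℚ) (1/2) (νn - δn)) +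
        ((δcn : ℚ) / 2 - pairSel (Δcn : ℚ) (1/2) (νn - δn))
      = (δn + δcn) / 2 - pairSel (Δn + Δcn) (1/2 + 1/2) (νn - δn) := by
        rw [← pairSel_add_pairSel]; ring
    _ = -(1/2) := by
        rw [hδq, hΔq, show (1/2 + 1/2 : ℚ) = 1 by norm_num, pairSel_self]; norm_num

/-- Mixed-branch cancellation: if at a vertex `s` the two Saito dicriticities
(for numberings `n` and `c·n`) are complementary, the white-parent counts are
complementary, and the valuations differ by one, then the two square indices
sum to `-1/2`. -/
theorem mixed_branch_square_index_sum
    (δn δcn Δn Δcn νn νcn : ℤ)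
    (hΔ01 : Δn = 0 ∨ Δn = 1) (hΔ : Δn + Δcn = 1)
    (hδ01 : δn = 0 ∨ δn = 1) (hδ : δn + δcn = 1)
    (hν : νcn = νn + 1) :
    ((δn : ℚ) / 2 - pairSel (Δn : ℚ) (1/2) (νn - δn)) +
      ((δcn : ℚ) / 2 - pairSel (Δcn : ℚ) (1/2) (νcn - δcn)) = -(1/2) :=
  mixed_branch_square_index_sum_general δn δcn Δn Δcn νn νcn hΔ hδ hν
end

section
/- For a tree A with two vertices r ≤ c (proximity matrix [[1,-1],[0,1]]) and any numbering (n_1, n_2), suppose the Saito dicriticity satisfies: the dicriticity Δ = (Δ_1, Δ_2) is admissible, meaning (i) if Δ_i = 0 then ε_i ≥ 2 - Σ_{neighbors j of i} Δ_j, and (ii) if Δ_i = 1 then ε_i ≥ n_i, where ε = (n/2) - P·□ with □_i = δ_i/2 - ⌊Δ_i, 1/2⌋_{ν_i - δ_i}, ν = P⁻¹ n, δ_1 = 0, δ_2 = Δ_1. Then for each numbering (n_1, n_2) there exists exactly one admissible dicriticity in {0,1}². -/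
section TwoVertexTree

variable (n1 n2 : ℕ) (Δ : Fin 2 → ℤ)

/-- Valuations for the two-vertex tree: ν₁ = n₁ + n₂, ν₂ = n₂. -/
def nu1 : ℤ := (n1 : ℤ) + n2
def nu2 : ℤ := (n2 : ℤ)

/-- Square index at the root (δ₁ = 0). -/
noncomputable def sq1 : ℚ := (0 : ℚ) / 2 - pairSel (Δ 0 : ℚ) (1/2) (nu1 n1 n2 - 0)

/-- Square index at the child (δ₂ = Δ₁). -/
noncomputable def sq2 : ℚ := (Δ 0 : ℚ) / 2 - pairSel (Δ 1 : ℚ) (1/2) (nu2 n2 - Δ 0)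

/-- Configuration ε = (n/2) - P·□ for P = [[1,-1],[0,1]]. -/
noncomputable def eps1 : ℚ := (n1 : ℚ) / 2 - sq1 n1 n2 Δ + sq2 n2 Δ
noncomputable def eps2 : ℚ := (n2 : ℚ) / 2 - sq2 n2 Δ

/-- Admissibility of the dicriticity Δ for the two-vertex tree. -/
noncomputable def admTwo : Prop :=
  (Δ 0 = 0 → eps1 n1 n2 Δ ≥ 2 - (Δ 1 : ℚ)) ∧
  (Δ 0 = 1 → eps1 n1 n2 Δ ≥ (n1 : ℚ)) ∧
  (Δ 1 = 0 → eps2 n2 Δ ≥ 2 - (Δ 0 : ℚ)) ∧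
  (Δ 1 = 1 → eps2 n2 Δ ≥ (n2 : ℚ))

def twicePairSelHalf (a k : ℤ) : ℤ := if Even k then 2 * a else 1

lemma two_mul_pairSel_half (a k : ℤ) :
    2 * pairSel (a : ℚ) (1 / 2) k = twicePairSelHalf a k := by
  unfold pairSel twicePairSelHalf
  split_ifs <;> push_cast <;> ring

def twiceEps1 (d0 d1 : ℤ) : ℤ :=
  n1 + twicePairSelHalf d0 (nu1 n1 n2) + d0 - twicePairSelHalf d1 (nu2 n2 - d0)

def twiceEps2 (d0 d1 : ℤ) : ℤ :=
  n2 - d0 + twicePairSelHalf d1 (nu2 n2 - d0)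

lemma two_mul_eps1 : 2 * eps1 n1 n2 Δ = twiceEps1 n1 n2 (Δ 0) (Δ 1) := by
  have h1 := two_mul_pairSel_half (Δ 0) (nu1 n1 n2)
  have h2 := two_mul_pairSel_half (Δ 1) (nu2 n2 - Δ 0)
  simp only [eps1, sq1, sq2, twiceEps1, sub_zero] at *
  push_cast
  linarith

lemma two_mul_eps2 : 2 * eps2 n2 Δ = twiceEps2 n2 (Δ 0) (Δ 1) := by
  have h := two_mul_pairSel_half (Δ 1) (nu2 n2 - Δ 0)
  simp only [eps2, sq2, twiceEps2] at *
  push_cast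
  linarith

def AdmTwoDoubled (d0 d1 : ℤ) : Prop :=
  (d0 = 0 → 4 - 2 * d1 ≤ twiceEps1 n1 n2 d0 d1) ∧
  (d0 = 1 → 2 * n1 ≤ twiceEps1 n1 n2 d0 d1) ∧
  (d1 = 0 → 4 - 2 * d0 ≤ twiceEps2 n2 d0 d1) ∧
  (d1 = 1 → 2 * n2 ≤ twiceEps2 n2 d0 d1)

lemma admTwo_iff : admTwo n1 n2 Δ ↔ AdmTwoDoubled n1 n2 (Δ 0) (Δ 1) := by
  have doubled {x y : ℚ} {z w : ℤ} (hx : 2 * x = z) (hy : 2 * y = w) : x ≥ y ↔ w ≤ z := by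
    rw [ge_iff_le, ← mul_le_mul_iff_of_pos_left (two_pos : (0 : ℚ) < 2), hx, hy]
    exact Int.cast_le
  have h1 := two_mul_eps1 n1 n2 Δ
  have h2 := two_mul_eps2 n2 Δ
  refine and_congr (imp_congr_right fun _ => doubled h1 ?_) <| and_congr
    (imp_congr_right fun _ => doubled h1 ?_) <| and_congr
    (imp_congr_right fun _ => doubled h2 ?_) (imp_congr_right fun _ => doubled h2 ?_) <;>
  push_cast <;> ring

variable {n1 n2} in
lemma AdmTwoDoubled.unique {d0 d1 e0 e1 : ℤ} (hd0 : d0 = 0 ∨ d0 = 1) (hd1 : d1 = 0 ∨ d1 = 1)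
    (he0 : e0 = 0 ∨ e0 = 1) (he1 : e1 = 0 ∨ e1 = 1)
    (hd : AdmTwoDoubled n1 n2 d0 d1) (he : AdmTwoDoubled n1 n2 e0 e1) : d0 = e0 ∧ d1 = e1 := by
  simp only [AdmTwoDoubled, twiceEps1, twiceEps2, twicePairSelHalf, nu1, nu2, Int.even_iff]
    at hd he
  rcases hd0 with rfl | rfl <;> rcases hd1 with rfl | rfl <;> rcases he0 with rfl | rfl <;>
    rcases he1 with rfl | rfl <;> split_ifs at hd he <;> omega

lemma exists_admTwoDoubled :
    ∃ d0 d1 : ℤ, (d0 = 0 ∨ d0 = 1) ∧ (d1 = 0 ∨ d1 = 1) ∧ AdmTwoDoubled n1 n2 d0 d1 := by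
  by_contra! h
  have h00 := h 0 0 (by simp) (by simp)
  have h01 := h 0 1 (by simp) (by simp)
  have h10 := h 1 0 (by simp) (by simp)
  have h11 := h 1 1 (by simp) (by simp)
  simp only [AdmTwoDoubled, twiceEps1, twiceEps2, twicePairSelHalf, nu1, nu2, Int.even_iff]
    at h00 h01 h10 h11
  split_ifs at h00 h01 h10 h11 <;> omega

/-- For the two-vertex tree and any numbering (n₁, n₂) there exists exactly one
admissible dicriticity in {0,1}². -/
theorem two_vertex_unique_admissible :
    ∃! Δ : Fin 2 → ℤ, (∀ i, Δ i = 0 ∨ Δ i = 1) ∧ admTwo n1 n2 Δ := by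
  obtain ⟨d0, d1, hd0, hd1, hd⟩ := exists_admTwoDoubled n1 n2
  refine ⟨![d0, d1], ⟨Fin.forall_fin_two.2 ⟨hd0, hd1⟩, (admTwo_iff n1 n2 _).2 hd⟩, ?_⟩
  rintro Δ ⟨hΔ, hadm⟩
  obtain ⟨h0, h1⟩ := ((admTwo_iff n1 n2 Δ).1 hadm).unique (hΔ 0) (hΔ 1) hd0 hd1 hd
  ext i
  fin_cases i <;> simp [h0, h1]

end TwoVertexTree
end
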